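/- arXiv:math/0204016 — 4 statements merged into one kernel-verified Lean document; each statement's English description precedes it below -/
import Mathlib

section
/- Let n ≥ 2 and let α₁, …, αₙ be vectors in ℝ^{n−1}. If the cone S(α₁, …, αₙ) equals all of ℝ^{n−1}, then any n−1 of the vectors α₁, …, αₙ are linearly independent; that is, for every i ∈ {1, …, n}, the family (α_k)_{k ≠ i} is linearly independent in ℝ^{n−1}. -/
open scoped BigOperators

/-- The cone generated by the vectors `α 0, …, α (r-1)` in `ℝ^m`:
`S(α₁, …, α_r) = {s₁α₁ + ⋯ + s_rα_r : s₁, …, s_r ≥ 0}`. -/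
def coneS {m r : ℕ} (α : Fin r → (Fin m → ℝ)) : Set (Fin m → ℝ) :=
  {x | ∃ s : Fin r → ℝ, (∀ i, 0 ≤ s i) ∧ x = ∑ i, s i • α i}

/-- If the cone generated by `n` vectors in `ℝ^{n-1}` is all of `ℝ^{n-1}`, then any
`n-1` of the vectors are linearly independent. -/
theorem cone_eq_univ_linearIndependent (n : ℕ) (hn : 2 ≤ n)
    (α : Fin n → (Fin (n - 1) → ℝ)) (hS : coneS α = Set.univ) :
    ∀ i : Fin n, LinearIndependent ℝ (fun k : {k : Fin n // k ≠ i} => α k) := by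
  intro i
  set g : {k : Fin n // k ≠ i} → (Fin (n - 1) → ℝ) := fun k => α k with hg
  set W : Submodule ℝ (Fin (n - 1) → ℝ) := Submodule.span ℝ (Set.range g) with hWdef
  by_cases hW : W = ⊤
  · -- span is everything, so finrank of span = card, hence independent
    rw [linearIndependent_iff_card_eq_finrank_span]
    have hcard : Fintype.card {k : Fin n // k ≠ i} = n - 1 := by
      have := Fintype.card_subtype_compl (fun k : Fin n => k = i)
      simpa using this
    rw [hcard, Set.finrank, ← hWdef, hW]
    simp [Module.finrank_fin_fun]
  · -- W is proper; construct a functional vanishing on W, nonneg on α i, negative somewhere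
    exfalso
    have hWlt : W < ⊤ := lt_top_iff_ne_top.mpr hW
    have key : ∃ (f : Module.Dual ℝ (Fin (n - 1) → ℝ)) (v : Fin (n - 1) → ℝ),
        f v = -1 ∧ (∀ k : Fin n, k ≠ i → f (α k) = 0) ∧ 0 ≤ f (α i) := by
      by_cases hai : α i ∈ W
      · obtain ⟨x, hx⟩ : ∃ x, x ∉ W := by
          by_contra h; push_neg at h
          exact hW (by ext y; simp [h y])
        obtain ⟨f, hf0, hfW⟩ := W.exists_dual_map_eq_bot_of_notMem hx inferInstance
        have hker : ∀ y ∈ W, f y = 0 := fun y hy => by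
          have := Submodule.mem_map_of_mem (f := f) hy
          rw [hfW] at this; simpa using this
        refine ⟨(f x)⁻¹ • f, -x, ?_, ?_, ?_⟩
        · simp [inv_mul_cancel₀ hf0]
        · intro k hk
          have : α k ∈ W := Submodule.subset_span ⟨⟨k, hk⟩, rfl⟩
          simp [hker _ this]
        · simp [hker _ hai]
      · obtain ⟨f, hf0, hfW⟩ := W.exists_dual_map_eq_bot_of_notMem hai inferInstance
        have hker : ∀ y ∈ W, f y = 0 := fun y hy => by
          have := Submodule.mem_map_of_mem (f := f) hy
          rw [hfW] at this; simpa using this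
        refine ⟨(f (α i))⁻¹ • f, -(α i), ?_, ?_, ?_⟩
        · simp [inv_mul_cancel₀ hf0]
        · intro k hk
          have : α k ∈ W := Submodule.subset_span ⟨⟨k, hk⟩, rfl⟩
          simp [hker _ this]
        · simp [inv_mul_cancel₀ hf0]
    obtain ⟨f, v, hfv, hzero, hpos⟩ := key
    have hv : v ∈ coneS α := by rw [hS]; trivial
    obtain ⟨s, hs, hsum⟩ := hv
    have : f v = s i * f (α i) := by
      rw [hsum, map_sum]
      rw [Finset.sum_eq_single i]
      · simp
      · intro k _ hk; simp [hzero k hk]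
      · simp
    rw [hfv] at this
    nlinarith [mul_nonneg (hs i) hpos, this]
end

section
/- Let n ≥ 3 and let α₁, …, αₙ be vectors in ℝ^{n−1} such that any n−1 of them are linearly independent. For z = (z₁, …, zₙ) ∈ ℂⁿ, let 𝔥_z = {v ∈ ℝ^{n−1} : ⟨α_k, v⟩ = 0 for every k with z_k ≠ 0}. Then 𝔥_z is a one-dimensional vector subspace of ℝ^{n−1} if and only if exactly two of the coordinates z₁, …, zₙ are zero, i.e., if and only if z lies in W_{i,j} = {z ∈ ℂⁿ : z_i = z_j = 0 and z_k ≠ 0 for all k ≠ i, j} for some pair 1 ≤ i < j ≤ n. -/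
/-!
`𝔥_z` is the kernel of the matrix whose rows are the weights `α k` with `z k ≠ 0`, so its
dimension is `n - 1` minus the rank of these rows. If some `z i` vanishes, the rows are among
the `n - 1` independent weights `α k`, `k ≠ i`, and the rank is their number `n - #Z`, where
`Z` is the zero set of `z`; if no coordinate vanishes, the rows span `ℝ^{n-1}`. In both cases
`dim 𝔥_z = #Z - 1` (truncated subtraction), which is `1` exactly when `#Z = 2`.
-/

open Module Set Submodule

section

variable {K V ι : Type*} [Field K] [AddCommGroup V] [Module K V] [Finite ι] {α : ι → V}

theorem finrank_span_image_compl_of_mem (hα : ∀ i, LinearIndepOn K α {i}ᶜ) {s : Set ι}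
    {i : ι} (hi : i ∈ s) :
    finrank K (span K (α '' sᶜ)) = Nat.card ι - s.ncard := by
  have := Fintype.ofFinite ↥sᶜ
  rw [image_eq_range, finrank_span_eq_card ((hα i).mono (by simpa using hi)),
    ← Nat.card_eq_fintype_card, Nat.card_coe_set_eq, ncard_compl]

theorem card_sub_one_le_finrank_span_range (hα : ∀ i, LinearIndepOn K α {i}ᶜ) :
    Nat.card ι - 1 ≤ finrank K (span K (range α)) := by
  rcases isEmpty_or_nonempty ι with _ | ⟨⟨i⟩⟩
  · simp
  have := FiniteDimensional.span_of_finite K (finite_range α)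
  calc Nat.card ι - 1 = finrank K (span K (α '' {i}ᶜ)) := by
        rw [finrank_span_image_compl_of_mem hα (mem_singleton i), ncard_singleton]
    _ ≤ finrank K (span K (range α)) := finrank_mono (span_mono (image_subset_range α _))

theorem span_range_eq_top_of_finrank_eq [FiniteDimensional K V]
    (hα : ∀ i, LinearIndepOn K α {i}ᶜ) (hV : finrank K V = Nat.card ι - 1) :
    span K (range α) = ⊤ :=
  eq_top_of_finrank_eq <| le_antisymm (finrank_le _) (hV ▸ card_sub_one_le_finrank_span_range hα)

end

theorem Matrix.rank_add_finrank_ker_mulVecLin {K m n : Type*} [Field K] [Fintype n]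
    (A : Matrix m n K) : A.rank + finrank K (LinearMap.ker A.mulVecLin) = Fintype.card n := by
  rw [Matrix.rank, LinearMap.finrank_range_add_finrank_ker, finrank_fintype_fun_eq_card]

theorem finrank_ker_mulVecLin_of_compl_rows_eq_ncard_sub_one {K ι n : Type*} [Field K]
    [Finite ι] [Fintype n] {α : ι → n → K} (hα : ∀ i, LinearIndepOn K α {i}ᶜ)
    (hn : Fintype.card n = Nat.card ι - 1) (s : Set ι) :
    finrank K (LinearMap.ker (Matrix.of fun k : ↥sᶜ => α k).mulVecLin) = s.ncard - 1 := by
  have hrank : (Matrix.of fun k : ↥sᶜ => α k).rank = finrank K (span K (α '' sᶜ)) := by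
    rw [Matrix.rank_eq_finrank_span_row, image_eq_range]
    rfl
  have hsum := (Matrix.of fun k : ↥sᶜ => α k).rank_add_finrank_ker_mulVecLin
  rcases s.eq_empty_or_nonempty with rfl | ⟨i, hi⟩
  · have htop : span K (α '' ∅ᶜ) = ⊤ := by
      rw [compl_empty, image_univ]
      exact span_range_eq_top_of_finrank_eq hα (by rwa [finrank_fintype_fun_eq_card])
    rw [hrank, htop, finrank_top, finrank_fintype_fun_eq_card] at hsum
    rw [ncard_empty]
    omega
  · rw [hrank, finrank_span_image_compl_of_mem hα hi] at hsum
    have := (ncard_pos).2 ⟨i, hi⟩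
    have := ncard_le_card s
    omega

theorem Set.ncard_eq_two_iff_exists_lt {β : Type*} [LinearOrder β] {s : Set β} :
    s.ncard = 2 ↔ ∃ i j, i < j ∧ i ∈ s ∧ j ∈ s ∧ ∀ k, k ≠ i → k ≠ j → k ∉ s := by
  rw [ncard_eq_two]
  constructor
  · rintro ⟨x, y, hxy, rfl⟩
    rcases hxy.lt_or_gt with h | h
    · exact ⟨x, y, h, by simp, by simp, by simp +contextual⟩
    · exact ⟨y, x, h, by simp, by simp, by simp +contextual⟩
  · rintro ⟨i, j, hij, hi, hj, hout⟩
    refine ⟨i, j, hij.ne, Subset.antisymm (fun k hk => ?_) (insert_subset hi (by simpa))⟩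
    by_contra h
    simp only [mem_insert_iff, mem_singleton_iff, not_or] at h
    exact hout k h.1 h.2 hk

theorem stabilizer_algebra_one_dim_iff_general (n : ℕ)
    (α : Fin n → (Fin (n - 1) → ℝ))
    (hind : ∀ i : Fin n, LinearIndependent ℝ (fun k : {k : Fin n // k ≠ i} => α k))
    (z : Fin n → ℂ) :
    (∃ W : Submodule ℝ (Fin (n - 1) → ℝ),
        (W : Set (Fin (n - 1) → ℝ)) =
          {v : Fin (n - 1) → ℝ | ∀ k : Fin n, z k ≠ 0 → ∑ m, α k m * v m = 0} ∧
        Module.finrank ℝ W = 1) ↔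
      (∃ i j : Fin n, i < j ∧ z i = 0 ∧ z j = 0 ∧
        ∀ k : Fin n, k ≠ i → k ≠ j → z k ≠ 0) := by
  let 𝔥 := LinearMap.ker (Matrix.of fun k : ↥{k | z k = 0}ᶜ => α k).mulVecLin
  have h𝔥 : (𝔥 : Set (Fin (n - 1) → ℝ)) =
      {v | ∀ k : Fin n, z k ≠ 0 → ∑ m, α k m * v m = 0} := by
    ext v
    simp [𝔥, funext_iff, Matrix.mulVec, dotProduct]
  have hdim : finrank ℝ 𝔥 = {k | z k = 0}.ncard - 1 :=
    finrank_ker_mulVecLin_of_compl_rows_eq_ncard_sub_one hind (by simp) _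
  simp only [← h𝔥, SetLike.coe_set_eq, exists_eq_left, hdim]
  exact Nat.pred_eq_succ_iff.trans ncard_eq_two_iff_exists_lt

/-- Infinitesimal form of Lemma 2.2: for weights `α₁, …, αₙ ∈ ℝ^{n-1}` any `n-1` of
which are linearly independent, the Lie algebra
`𝔥_z = {v : ⟨α_k, v⟩ = 0 for every k with z_k ≠ 0}` of the stabilizer of `z ∈ ℂⁿ`
is one-dimensional if and only if exactly two coordinates of `z` vanish. -/
theorem stabilizer_algebra_one_dim_iff (n : ℕ) (hn : 3 ≤ n)
    (α : Fin n → (Fin (n - 1) → ℝ))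
    (hind : ∀ i : Fin n, LinearIndependent ℝ (fun k : {k : Fin n // k ≠ i} => α k))
    (z : Fin n → ℂ) :
    (∃ W : Submodule ℝ (Fin (n - 1) → ℝ),
        (W : Set (Fin (n - 1) → ℝ)) =
          {v : Fin (n - 1) → ℝ | ∀ k : Fin n, z k ≠ 0 → ∑ m, α k m * v m = 0} ∧
        Module.finrank ℝ W = 1) ↔
      (∃ i j : Fin n, i < j ∧ z i = 0 ∧ z j = 0 ∧
        ∀ k : Fin n, k ≠ i → k ≠ j → z k ≠ 0) :=
  stabilizer_algebra_one_dim_iff_general n α hind z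
end

section
/- Let m ≥ 1, let I ⊆ {1, …, m}, and let d ∈ ℝ^m satisfy d_i < 0 for all i ∈ I and d_i = 0 for all i ∉ I. Let e₁, …, e_m be the standard basis of ℝ^m. Then S(e₁, …, e_m, d) = {x ∈ ℝ^m : x_i ≥ 0 for all i ∉ I}; in particular, if I has l elements, the cone S(e₁, …, e_m, d) is, after permuting coordinates, equal to ℝ^l × (ℝ_{≥0})^{m−l}. -/
open scoped BigOperators

/-- Computational core of case (ii) of Lemma 2.3: if `d ∈ ℝ^m` has `d_i < 0` for
`i ∈ I` and `d_i = 0` for `i ∉ I`, then the cone generated by the standard basis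
together with `d` is `{x : x_i ≥ 0 for i ∉ I}`; in particular, after permuting
coordinates it equals `ℝ^l × (ℝ_{≥0})^{m-l}` where `l = |I|`. -/
theorem cone_basis_with_nonpositive_vector (m : ℕ) (hm : 1 ≤ m)
    (I : Finset (Fin m)) (d : Fin m → ℝ)
    (hneg : ∀ i ∈ I, d i < 0) (hzero : ∀ i ∉ I, d i = 0) :
    coneS (Fin.snoc (fun i : Fin m => (Pi.single i 1 : Fin m → ℝ)) d) =
      {x : Fin m → ℝ | ∀ i ∉ I, 0 ≤ x i} ∧
    ∃ σ : Equiv.Perm (Fin m),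
      (fun x : Fin m → ℝ => x ∘ σ) ''
          coneS (Fin.snoc (fun i : Fin m => (Pi.single i 1 : Fin m → ℝ)) d) =
        {x : Fin m → ℝ | ∀ i : Fin m, I.card ≤ (i : ℕ) → 0 ≤ x i} := by
  have hval : ∀ (s : Fin (m+1) → ℝ) (i : Fin m),
      (∑ j, s j • (Fin.snoc (fun k : Fin m => (Pi.single k 1 : Fin m → ℝ)) d : Fin (m+1) → Fin m → ℝ) j) i
        = s i.castSucc + s (Fin.last m) * d i := by
    intro s i
    rw [Fin.sum_univ_castSucc]
    simp [Finset.sum_apply, Pi.single_apply, mul_ite]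
  have key : coneS (Fin.snoc (fun i : Fin m => (Pi.single i 1 : Fin m → ℝ)) d) =
      {x : Fin m → ℝ | ∀ i ∉ I, 0 ≤ x i} := by
    ext x
    constructor
    · rintro ⟨s, hs, rfl⟩ i hi
      rw [hval, hzero i hi]
      simpa using hs i.castSucc
    · intro hx
      set T : ℝ := ∑ j ∈ I, |x j / d j| with hT
      have hT0 : 0 ≤ T := Finset.sum_nonneg fun j _ => abs_nonneg _
      refine ⟨Fin.snoc (fun i => x i - T * d i) T, ?_, ?_⟩
      · intro i
        refine Fin.lastCases ?_ ?_ i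
        · simpa using hT0
        · intro j
          simp only [Fin.snoc_castSucc]
          by_cases hj : j ∈ I
          · have hd := hneg j hj
            have h1 : x j / d j ≤ T := by
              calc x j / d j ≤ |x j / d j| := le_abs_self _
                _ ≤ T := Finset.single_le_sum (f := fun k => |x k / d k|)
                    (fun k _ => abs_nonneg _) hj
            nlinarith [mul_le_mul_of_nonpos_right h1 hd.le, div_mul_cancel₀ (x j) hd.ne]
          · rw [hzero j hj]
            simpa using hx j hj
      · funext i
        rw [hval]
        simp
  refine ⟨key, ?_⟩
  classical
  have hIm : I.card ≤ m := by simpa using I.card_le_univ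
  have hcard : Fintype.card {i : Fin m // I.card ≤ (i : ℕ)} =
      Fintype.card {i : Fin m // i ∉ I} := by
    have hq : Fintype.card {i : Fin m // i ∉ I} = m - I.card := by
      rw [Fintype.card_subtype_compl, Fintype.card_fin, Fintype.card_coe]
    have hp : Fintype.card {i : Fin m // I.card ≤ (i : ℕ)} = m - I.card := by
      rw [Fintype.card_subtype]
      by_cases h : I.card < m
      · have : Finset.filter (fun i : Fin m => I.card ≤ (i : ℕ)) Finset.univ =
            Finset.Ici (⟨I.card, h⟩ : Fin m) := by
          ext i; simp [Fin.le_def]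
        rw [this, Fin.card_Ici]
      · have hm' : I.card = m := le_antisymm hIm (not_lt.mp h)
        have : Finset.filter (fun i : Fin m => I.card ≤ (i : ℕ)) Finset.univ = ∅ := by
          ext i
          simp only [Finset.mem_filter, Finset.notMem_empty, iff_false, not_and]
          intro _
          rw [hm']
          exact not_le.mpr i.isLt
        rw [this, hm']
        simp
    rw [hp, hq]
  let e : {i : Fin m // I.card ≤ (i : ℕ)} ≃ {i : Fin m // i ∉ I} :=
    Fintype.equivOfCardEq hcard
  refine ⟨e.extendSubtype, ?_⟩
  rw [key]
  ext y
  simp only [Set.mem_image, Set.mem_setOf_eq]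
  constructor
  · rintro ⟨x, hx, rfl⟩ i hi
    exact hx _ (e.extendSubtype_mem i hi)
  · intro hy
    refine ⟨y ∘ e.extendSubtype.symm, ?_, ?_⟩
    · intro i hi
      have hpi : I.card ≤ ((e.extendSubtype.symm i : Fin m) : ℕ) := by
        by_contra h
        exact (e.extendSubtype_not_mem _ h) (by simpa using hi)
      simpa using hy _ hpi
    · funext i; simp
end

section
/- Let n ≥ 2 and let α₁, …, αₙ be vectors in ℝ^{n−1} with S(α₁, …, αₙ) = ℝ^{n−1}. Let h ∈ ℝ^{n−1} be a nonzero vector and let i ≠ j be indices in {1, …, n} such that ⟨α_k, h⟩ = 0 for every k ∉ {i, j}. Then ⟨α_i, h⟩ and ⟨α_j, h⟩ are both nonzero and have opposite signs, i.e., ⟨α_i, h⟩ · ⟨α_j, h⟩ < 0. -/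
open scoped BigOperators

/-- Remark 2.3: if the cone of the weights is all of `ℝ^{n-1}` and a nonzero vector
`h` annihilates all weights except `α_i` and `α_j`, then the two remaining pairings
are nonzero with opposite signs. -/
theorem remaining_weights_opposite_signs (n : ℕ) (hn : 2 ≤ n)
    (α : Fin n → (Fin (n - 1) → ℝ)) (hS : coneS α = Set.univ)
    (h : Fin (n - 1) → ℝ) (hh : h ≠ 0) (i j : Fin n) (hij : i ≠ j)
    (hzero : ∀ k : Fin n, k ≠ i → k ≠ j → ∑ t, α k t * h t = 0) :
    (∑ t, α i t * h t) * (∑ t, α j t * h t) < 0 := by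
  set a := ∑ t, α i t * h t with ha
  set b := ∑ t, α j t * h t with hb
  -- every x is in the cone, and its pairing with h is p*a + q*b with p,q ≥ 0
  have key : ∀ x : Fin (n - 1) → ℝ, ∃ p q : ℝ, 0 ≤ p ∧ 0 ≤ q ∧
      ∑ t, x t * h t = p * a + q * b := by
    intro x
    have hx : x ∈ coneS α := by rw [hS]; trivial
    obtain ⟨s, hs, hxs⟩ := hx
    refine ⟨s i, s j, hs i, hs j, ?_⟩
    have h1 : ∑ t, x t * h t = ∑ k, s k * ∑ t, α k t * h t := by
      subst hxs
      calc ∑ t, (∑ k, s k • α k) t * h t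
          = ∑ t, ∑ k, s k * α k t * h t := by
            simp [Finset.sum_apply, Finset.sum_mul]
        _ = ∑ k, ∑ t, s k * α k t * h t := Finset.sum_comm
        _ = ∑ k, s k * ∑ t, α k t * h t := by
            simp [Finset.mul_sum, mul_assoc]
    rw [h1]
    have h2 : ∑ k, s k * ∑ t, α k t * h t
        = ∑ k ∈ ({i, j} : Finset (Fin n)), s k * ∑ t, α k t * h t := by
      symm
      apply Finset.sum_subset (Finset.subset_univ _)
      intro k _ hk
      simp only [Finset.mem_insert, Finset.mem_singleton, not_or] at hk
      rw [hzero k hk.1 hk.2, mul_zero]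
    rw [h2, Finset.sum_pair hij]
  have hnorm : 0 < ∑ t, h t * h t := by
    have : ∃ t, h t ≠ 0 := by
      by_contra hc
      push_neg at hc
      exact hh (funext fun t => hc t)
    obtain ⟨t0, ht0⟩ := this
    have hsq : (0:ℝ) < h t0 * h t0 := by
      rcases ht0.lt_or_gt with hlt | hgt
      · exact mul_pos_of_neg_of_neg hlt hlt
      · exact mul_pos hgt hgt
    exact Finset.sum_pos' (fun t _ => mul_self_nonneg _) ⟨t0, Finset.mem_univ _, hsq⟩
  obtain ⟨p, q, hp, hq, hpq⟩ := key h
  obtain ⟨p', q', hp', hq', hpq'⟩ := key (-h)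
  have hpos : 0 < p * a + q * b := by rw [← hpq]; exact hnorm
  have hneg : p' * a + q' * b < 0 := by
    have : ∑ t, (-h) t * h t = -∑ t, h t * h t := by
      rw [← Finset.sum_neg_distrib]
      exact Finset.sum_congr rfl fun t _ => by simp
    rw [this] at hpq'
    rw [← hpq']
    linarith
  -- now pure arithmetic
  rcases lt_trichotomy a 0 with halt | haeq | hagt
  · rcases lt_trichotomy b 0 with hblt | hbeq | hbgt
    · nlinarith
    · nlinarith
    · exact mul_neg_of_neg_of_pos halt hbgt
  · rcases lt_trichotomy b 0 with hblt | hbeq | hbgt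
    · nlinarith
    · nlinarith
    · nlinarith
  · rcases lt_trichotomy b 0 with hblt | hbeq | hbgt
    · exact mul_neg_of_pos_of_neg hagt hblt
    · nlinarith
    · nlinarith
end
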